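/- Let n ≥ 1 and s ∈ ℝ. For every C¹ vector field Y on ℝⁿ with compact support contained in ℝⁿ ∖ {0}, one has ∫ r^{−2s−n+2} Σᵢ,ⱼ (S(Y)ᵢⱼ + (1/2)(div Y)δᵢⱼ) Yᵢ (xⱼ/r²) dx = (1/2) ∫ r^{−2s−n} [ (s−1)|Y|² + (2s+n)⟨x̂, Y⟩² ] dx, where r = ‖x‖ and x̂ = x/‖x‖. -/

import Mathlib

/-!
With `p = -2s - n`, put `W = r^p (½⟨x, Y⟩ Y + ¼|Y|² x)`. Since `Y` vanishes near the origin,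
`W` is `C¹` with compact support, so `∫ div W = 0`. Expanding `div W` with the product rule
(`div x = n`, `∇ r^p = p r^(p-2) x`), the left integrand equals `div W` plus half the right
integrand: the exponent `p` is exactly the one making the `⟨x̂, Y⟩²` and `|Y|²` coefficients
come out as `2s + n` and `s - 1`.
-/

open MeasureTheory Real

/-- The `i`-th partial derivative of a function on `ℝⁿ`. -/
noncomputable def pd (n : ℕ) (f : EuclideanSpace ℝ (Fin n) → ℝ)
    (i : Fin n) (x : EuclideanSpace ℝ (Fin n)) : ℝ :=
  fderiv ℝ f x (EuclideanSpace.single i 1)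

/-- The squared Euclidean norm of the gradient, `|∇f|² = Σᵢ (∂ᵢf)²`. -/
noncomputable def gradSq (n : ℕ) (f : EuclideanSpace ℝ (Fin n) → ℝ)
    (x : EuclideanSpace ℝ (Fin n)) : ℝ :=
  ∑ i, (pd n f i x) ^ 2

/-- The Euclidean Laplacian, `Δf = Σᵢ ∂ᵢ²f`. -/
noncomputable def lap (n : ℕ) (f : EuclideanSpace ℝ (Fin n) → ℝ)
    (x : EuclideanSpace ℝ (Fin n)) : ℝ :=
  ∑ i, pd n (pd n f i) i x

/-- The partial derivative `∂ᵢYⱼ` of a vector field `Y` on `ℝⁿ`. -/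
noncomputable def vpd (n : ℕ)
    (Y : EuclideanSpace ℝ (Fin n) → EuclideanSpace ℝ (Fin n))
    (i j : Fin n) (x : EuclideanSpace ℝ (Fin n)) : ℝ :=
  fderiv ℝ (fun y => Y y j) x (EuclideanSpace.single i 1)

/-- The symmetrized gradient `S(Y)ᵢⱼ = (∂ᵢYⱼ + ∂ⱼYᵢ)/2` of a vector field. -/
noncomputable def symGrad (n : ℕ)
    (Y : EuclideanSpace ℝ (Fin n) → EuclideanSpace ℝ (Fin n))
    (i j : Fin n) (x : EuclideanSpace ℝ (Fin n)) : ℝ :=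
  (vpd n Y i j x + vpd n Y j i x) / 2

/-- The divergence `div Y = Σᵢ ∂ᵢYᵢ` of a vector field on `ℝⁿ`. -/
noncomputable def diverg (n : ℕ)
    (Y : EuclideanSpace ℝ (Fin n) → EuclideanSpace ℝ (Fin n))
    (x : EuclideanSpace ℝ (Fin n)) : ℝ :=
  ∑ i, vpd n Y i i x

open scoped RealInnerProductSpace

section General

variable {E : Type*} [NormedAddCommGroup E]

theorem hasFDerivAt_norm_rpow_of_ne_zero [InnerProductSpace ℝ E] {x : E} (hx : x ≠ 0) (p : ℝ) :
    HasFDerivAt (fun y : E => ‖y‖ ^ p) ((p * ‖x‖ ^ (p - 2)) • innerSL ℝ x) x := by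
  have h := (hasStrictFDerivAt_norm_sq x).hasFDerivAt.rpow_const (p := p / 2)
    (Or.inl (by positivity))
  convert h using 1
  · ext y
    rw [← rpow_natCast, ← rpow_mul (norm_nonneg y)]
    ring_nf
  · ext v
    simp only [smul_apply, innerSL_apply_apply, smul_eq_mul, nsmul_eq_mul]
    rw [← rpow_natCast, ← rpow_mul (norm_nonneg x)]
    ring_nf

theorem contDiff_of_forall_mem_tsupport {𝕜 F : Type*} [NontriviallyNormedField 𝕜]
    [NormedSpace 𝕜 E] [NormedAddCommGroup F] [NormedSpace 𝕜 F] {k : WithTop ℕ∞} {f : E → F}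
    (hf : ∀ x ∈ tsupport f, ContDiffAt 𝕜 k f x) : ContDiff 𝕜 k f :=
  contDiff_iff_contDiffAt.2 fun x => (em _).elim (hf x) fun hx =>
    contDiffAt_const.congr_of_eventuallyEq (notMem_tsupport_iff_eventuallyEq.mp hx)

theorem integral_fderiv_apply_eq_zero [NormedSpace ℝ E] [FiniteDimensional ℝ E]
    [MeasurableSpace E] [BorelSpace E] (μ : Measure E) [μ.IsAddHaarMeasure] {f : E → ℝ}
    (hf : ContDiff ℝ 1 f) (hc : HasCompactSupport f) (v : E) :
    ∫ x, fderiv ℝ f x v ∂μ = 0 := by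
  have hf' : Continuous fun x => fderiv ℝ f x v :=
    (hf.continuous_fderiv one_ne_zero).clm_apply continuous_const
  have h := integral_mul_fderiv_eq_neg_fderiv_mul_of_integrable (μ := μ)
    (f := fun _ => (1 : ℝ)) (g := f) (v := v) (by simp)
    (by simpa using hf'.integrable_of_hasCompactSupport (hc.fderiv_apply ℝ v))
    (by simpa using hf.continuous.integrable_of_hasCompactSupport hc)
    (fun _ _ => differentiableAt_const _) (fun x _ => hf.differentiable one_ne_zero x)
  simpa using h

end General

section Divergence

variable {n : ℕ} {x : EuclideanSpace ℝ (Fin n)}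
  {V W : EuclideanSpace ℝ (Fin n) → EuclideanSpace ℝ (Fin n)}

theorem vpd_eq_fderiv_apply (hV : DifferentiableAt ℝ V x) (i j : Fin n) :
    vpd n V i j x = fderiv ℝ V x (EuclideanSpace.single i 1) j := by
  change fderiv ℝ (EuclideanSpace.proj j ∘ V) x _ = _
  rw [((EuclideanSpace.proj j).hasFDerivAt.comp x hV.hasFDerivAt).fderiv]
  rfl

theorem diverg_eq_trace (hV : DifferentiableAt ℝ V x) :
    diverg n V x = LinearMap.trace ℝ _
      (fderiv ℝ V x : EuclideanSpace ℝ (Fin n) →ₗ[ℝ] EuclideanSpace ℝ (Fin n)) := by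
  rw [LinearMap.trace_eq_matrix_trace ℝ (EuclideanSpace.basisFun (Fin n) ℝ).toBasis, Matrix.trace]
  simp [diverg, vpd_eq_fderiv_apply hV, LinearMap.toMatrix_apply]

theorem diverg_add (hV : DifferentiableAt ℝ V x) (hW : DifferentiableAt ℝ W x) :
    diverg n (fun y => V y + W y) x = diverg n V x + diverg n W x := by
  rw [diverg_eq_trace (V := fun y => V y + W y) (hV.add hW), diverg_eq_trace hV,
    diverg_eq_trace hW, fderiv_fun_add hV hW]
  simp

theorem diverg_smul {φ : EuclideanSpace ℝ (Fin n) → ℝ} (hφ : DifferentiableAt ℝ φ x)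
    (hV : DifferentiableAt ℝ V x) :
    diverg n (fun y => φ y • V y) x = φ x * diverg n V x + fderiv ℝ φ x (V x) := by
  rw [diverg_eq_trace (V := fun y => φ y • V y) (hφ.smul hV), diverg_eq_trace hV,
    fderiv_fun_smul hφ hV]
  simp

theorem diverg_id : diverg n (fun y => y) x = n := by
  rw [diverg_eq_trace (V := fun y => y) differentiableAt_fun_id, fderiv_fun_id]
  simp

theorem diverg_eq_zero_of_notMem_tsupport (hx : x ∉ tsupport V) : diverg n V x = 0 :=
  Finset.sum_eq_zero fun i _ => by
    change fderiv ℝ (EuclideanSpace.proj (𝕜 := ℝ) i ∘ V) x _ = 0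
    rw [fderiv_of_notMem_tsupport ℝ fun h =>
      hx (tsupport_comp_subset (g := EuclideanSpace.proj i) (map_zero _) V h)]
    rfl

section Integral

variable (hV : ContDiff ℝ 1 V) (hc : HasCompactSupport V)
include hV hc

theorem integrable_vpd (i j : Fin n) : Integrable (vpd n V i j) :=
  (((EuclideanSpace.proj (𝕜 := ℝ) j).contDiff.comp hV).continuous_fderiv one_ne_zero
    |>.clm_apply continuous_const).integrable_of_hasCompactSupport
    ((hc.comp_left (g := EuclideanSpace.proj j) (map_zero _)).fderiv_apply ℝ _)

theorem integrable_diverg : Integrable (diverg n V) :=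
  integrable_finsetSum _ fun i _ => integrable_vpd hV hc i i

theorem integral_diverg_eq_zero : ∫ x, diverg n V x = 0 := by
  simp only [diverg]
  rw [integral_finsetSum _ fun i _ => integrable_vpd hV hc i i]
  exact Finset.sum_eq_zero fun i _ => integral_fderiv_apply_eq_zero _
    ((EuclideanSpace.proj (𝕜 := ℝ) i).contDiff.comp hV)
    (hc.comp_left (g := EuclideanSpace.proj i) (map_zero _)) _

end Integral

theorem sum_sum_vpd_mul_mul (hV : DifferentiableAt ℝ V x) (u v : EuclideanSpace ℝ (Fin n)) :
    ∑ i, ∑ j, vpd n V i j x * u i * v j = ⟪v, fderiv ℝ V x u⟫ := by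
  conv_rhs => rw [← (EuclideanSpace.basisFun (Fin n) ℝ).toBasis.sum_repr u]
  simp only [map_sum, map_smul, inner_sum, inner_smul_right, PiLp.inner_apply, Finset.mul_sum,
    vpd_eq_fderiv_apply hV, OrthonormalBasis.coe_toBasis_repr_apply,
    EuclideanSpace.basisFun_repr, OrthonormalBasis.coe_toBasis, EuclideanSpace.basisFun_apply,
    RCLike.inner_apply, ringHom_apply]
  exact Finset.sum_congr rfl fun i _ => Finset.sum_congr rfl fun j _ => by ring

theorem sum_sum_symGrad_add_diverg_mul_mul (hV : DifferentiableAt ℝ V x)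
    (u v : EuclideanSpace ℝ (Fin n)) :
    ∑ i, ∑ j, (symGrad n V i j x + 1 / 2 * diverg n V x * (if i = j then 1 else 0)) * u i * v j
      = (⟪v, fderiv ℝ V x u⟫ + ⟪u, fderiv ℝ V x v⟫ + diverg n V x * ⟪u, v⟫) / 2 := by
  rw [← sum_sum_vpd_mul_mul hV, ← sum_sum_vpd_mul_mul hV,
    Finset.sum_comm (f := fun i j => vpd n V i j x * v i * u j)]
  simp only [symGrad, add_mul, Finset.sum_add_distrib, PiLp.inner_apply, one_div, mul_ite,
    mul_one, mul_zero, ite_mul, zero_mul, Finset.sum_ite_eq, Finset.mem_univ, ↓reduceIte,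
    RCLike.inner_apply, ringHom_apply, Finset.mul_sum]
  rw [add_div, add_div]
  congr 1
  · simp only [Finset.sum_div, ← Finset.sum_add_distrib]
    exact Finset.sum_congr rfl fun i _ => Finset.sum_congr rfl fun j _ => by ring
  · simp only [Finset.sum_div]
    exact Finset.sum_congr rfl fun i _ => by ring

end Divergence

noncomputable def radialFlux {n : ℕ} (p : ℝ)
    (Y : EuclideanSpace ℝ (Fin n) → EuclideanSpace ℝ (Fin n)) (y : EuclideanSpace ℝ (Fin n)) :
    EuclideanSpace ℝ (Fin n) :=
  ‖y‖ ^ p • ((2⁻¹ * ⟪y, Y y⟫) • Y y + (4⁻¹ * ‖Y y‖ ^ 2) • y)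

section RadialFlux

variable {n : ℕ} {x : EuclideanSpace ℝ (Fin n)}
  {Y : EuclideanSpace ℝ (Fin n) → EuclideanSpace ℝ (Fin n)}

theorem diverg_radialFlux (hY : DifferentiableAt ℝ Y x) (hx : x ≠ 0) (p : ℝ) :
    diverg n (radialFlux p Y) x =
      ‖x‖ ^ p * ((⟪x, Y x⟫ * diverg n Y x + ⟪x, fderiv ℝ Y x (Y x)⟫
          + ⟪Y x, fderiv ℝ Y x x⟫) / 2 + (2 + n) / 4 * ‖Y x‖ ^ 2)
        + p * ‖x‖ ^ (p - 2) * (⟪x, Y x⟫ ^ 2 / 2 + ‖x‖ ^ 2 * ‖Y x‖ ^ 2 / 4) := by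
  have hφ := hasFDerivAt_norm_rpow_of_ne_zero hx p
  have hc₁ : HasFDerivAt (fun y => 2⁻¹ * ⟪y, Y y⟫) _ x :=
    ((hasFDerivAt_id x).inner ℝ hY.hasFDerivAt).const_mul 2⁻¹
  have hc₂ : HasFDerivAt (fun y => 4⁻¹ * ‖Y y‖ ^ 2) _ x := hY.hasFDerivAt.norm_sq.const_mul 4⁻¹
  have hV₁ : DifferentiableAt ℝ (fun y => (2⁻¹ * ⟪y, Y y⟫) • Y y) x :=
    hc₁.differentiableAt.smul hY
  have hV₂ : DifferentiableAt ℝ (fun y => (4⁻¹ * ‖Y y‖ ^ 2) • y) x :=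
    hc₂.differentiableAt.smul differentiableAt_fun_id
  unfold radialFlux
  rw [diverg_smul hφ.differentiableAt (hV₁.fun_add hV₂), diverg_add hV₁ hV₂,
    diverg_smul hc₁.differentiableAt hY, diverg_smul hc₂.differentiableAt differentiableAt_fun_id,
    diverg_id, hφ.fderiv, hc₁.fderiv, hc₂.fderiv]
  simp only [id_eq, smul_apply, ContinuousLinearMap.comp_apply, ContinuousLinearMap.prod_apply,
    ContinuousLinearMap.id_apply, fderivInnerCLM_apply, inner_self_eq_norm_sq_to_K, ringHom_apply,
    smul_eq_mul, coe_innerSL_apply, nsmul_eq_mul, Nat.cast_ofNat, inner_add_right,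
    inner_smul_right]
  ring

theorem tsupport_radialFlux_subset (p : ℝ) : tsupport (radialFlux p Y) ⊆ tsupport Y :=
  closure_mono fun y hy hYy => hy (by simp [radialFlux, hYy])

theorem contDiff_radialFlux (hY : ContDiff ℝ 1 Y) (h0 : 0 ∉ tsupport Y) (p : ℝ) :
    ContDiff ℝ 1 (radialFlux p Y) := by
  refine contDiff_of_forall_mem_tsupport fun x hx => ?_
  have hx0 : x ≠ 0 := by
    rintro rfl
    exact h0 (tsupport_radialFlux_subset p hx)
  have hφ : ContDiffAt ℝ 1 (fun y : EuclideanSpace ℝ (Fin n) => ‖y‖ ^ p) x :=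
    (contDiffAt_norm ℝ hx0).rpow_const_of_ne (norm_ne_zero_iff.2 hx0)
  have hc₁ : ContDiff ℝ 1 (fun y => 2⁻¹ * ⟪y, Y y⟫) := contDiff_const.mul (contDiff_id.inner ℝ hY)
  have hc₂ : ContDiff ℝ 1 (fun y => 4⁻¹ * ‖Y y‖ ^ 2) := contDiff_const.mul (hY.norm_sq ℝ)
  exact hφ.smul ((hc₁.smul hY).add (hc₂.smul contDiff_id)).contDiffAt

theorem radial_killing_integrand_eq (s : ℝ) (hY : DifferentiableAt ℝ Y x) (hx : x ≠ 0) :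
    ‖x‖ ^ (-2 * s - (n : ℝ) + 2) *
        ∑ i, ∑ j, (symGrad n Y i j x +
            (1/2) * diverg n Y x * (if i = j then (1:ℝ) else 0)) * Y x i * (x j / ‖x‖ ^ 2)
      = diverg n (radialFlux (-2 * s - n) Y) x + (1/2) * (‖x‖ ^ (-2 * s - (n : ℝ)) *
          ((s - 1) * (∑ i, (Y x i) ^ 2) + (2 * s + n) * (∑ i, (x i / ‖x‖) * Y x i) ^ 2)) := by
  have hr : 0 < ‖x‖ := norm_pos_iff.mpr hx
  have hsum : ∑ i, ∑ j, (symGrad n Y i j x +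
      (1/2) * diverg n Y x * (if i = j then (1:ℝ) else 0)) * Y x i * (x j / ‖x‖ ^ 2)
      = (⟪x, fderiv ℝ Y x (Y x)⟫ + ⟪Y x, fderiv ℝ Y x x⟫ + diverg n Y x * ⟪Y x, x⟫) / 2
        / ‖x‖ ^ 2 := by
    simp only [← sum_sum_symGrad_add_diverg_mul_mul hY, Finset.sum_div, mul_div_assoc]
  have hnorm : ∑ i, (Y x i) ^ 2 = ‖Y x‖ ^ 2 := (EuclideanSpace.real_norm_sq_eq _).symm
  have hradial : ∑ i, (x i / ‖x‖) * Y x i = ⟪x, Y x⟫ / ‖x‖ := by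
    simp only [PiLp.inner_apply, RCLike.inner_apply, conj_trivial, Finset.sum_div]
    exact Finset.sum_congr rfl fun i _ => by ring
  rw [hsum, hnorm, hradial, diverg_radialFlux hY hx, rpow_add hr, rpow_sub hr _ 2, rpow_two,
    real_inner_comm x (Y x)]
  field_simp
  ring

end RadialFlux

theorem radial_killing_identity_general (n : ℕ) (s : ℝ)
    (Y : EuclideanSpace ℝ (Fin n) → EuclideanSpace ℝ (Fin n))
    (hY : ContDiff ℝ 1 Y) (hsupp : HasCompactSupport Y)
    (h0 : tsupport Y ⊆ {x : EuclideanSpace ℝ (Fin n) | x ≠ 0}) :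
    ∫ x : EuclideanSpace ℝ (Fin n),
        ‖x‖ ^ (-2 * s - (n : ℝ) + 2) *
          ∑ i, ∑ j, (symGrad n Y i j x +
              (1/2) * diverg n Y x * (if i = j then (1:ℝ) else 0)) *
            Y x i * (x j / ‖x‖ ^ 2)
    = (1/2) * ∫ x : EuclideanSpace ℝ (Fin n),
        ‖x‖ ^ (-2 * s - (n : ℝ)) *
          ((s - 1) * (∑ i, (Y x i) ^ 2) +
            (2 * s + n) * (∑ i, (x i / ‖x‖) * Y x i) ^ 2) := by
  have h0' : (0 : EuclideanSpace ℝ (Fin n)) ∉ tsupport Y := fun h => h0 h rfl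
  set W := radialFlux (-2 * s - n) Y
  set g : EuclideanSpace ℝ (Fin n) → ℝ := fun x => ‖x‖ ^ (-2 * s - (n : ℝ)) *
    ((s - 1) * (∑ i, (Y x i) ^ 2) + (2 * s + n) * (∑ i, (x i / ‖x‖) * Y x i) ^ 2)
  have hW : ContDiff ℝ 1 W := contDiff_radialFlux hY h0' _
  have hWc : HasCompactSupport W :=
    hsupp.mono' (subset_closure.trans (tsupport_radialFlux_subset _))
  have hgY : Function.support g ⊆ Function.support Y := fun y hy hYy => hy (by simp [g, hYy])
  have hg : Integrable g := by
    refine Continuous.integrable_of_hasCompactSupport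
      (continuous_of_tsupport fun x hx => ?_) (hsupp.mono' (hgY.trans subset_closure))
    have hr : ‖x‖ ≠ 0 := norm_ne_zero_iff.2 (h0 (closure_mono hgY hx))
    have := hY.continuous
    fun_prop (disch := first | exact hr | exact Or.inl hr)
  rw [integral_congr_ae (g := fun x => diverg n W x + 1 / 2 * g x) (.of_forall fun x => ?_),
    integral_add (integrable_diverg hW hWc) (hg.const_mul _), integral_diverg_eq_zero hW hWc,
    integral_const_mul, zero_add]
  rcases eq_or_ne x 0 with rfl | hx
  · have hY0 : Y 0 = 0 := image_eq_zero_of_notMem_tsupport h0'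
    have hW0 : diverg n W 0 = 0 :=
      diverg_eq_zero_of_notMem_tsupport fun h => h0' (tsupport_radialFlux_subset _ h)
    simp [hW0, g, hY0]
  · exact radial_killing_integrand_eq s (hY.differentiable one_ne_zero x) hx

/-- Flat-case radial identity for the Killing operator:
`∫ r^{−2s−n+2} Σᵢⱼ(S(Y)ᵢⱼ + ½(div Y)δᵢⱼ) Yᵢ (xⱼ/r²)
  = ½ ∫ r^{−2s−n} [(s−1)|Y|² + (2s+n)⟨x̂,Y⟩²]`
for `Y` of class `C¹` compactly supported away from the origin. -/
theorem radial_killing_identity (n : ℕ) (hn : 1 ≤ n) (s : ℝ)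
    (Y : EuclideanSpace ℝ (Fin n) → EuclideanSpace ℝ (Fin n))
    (hY : ContDiff ℝ 1 Y) (hsupp : HasCompactSupport Y)
    (h0 : tsupport Y ⊆ {x : EuclideanSpace ℝ (Fin n) | x ≠ 0}) :
    ∫ x : EuclideanSpace ℝ (Fin n),
        ‖x‖ ^ (-2 * s - (n : ℝ) + 2) *
          ∑ i, ∑ j, (symGrad n Y i j x +
              (1/2) * diverg n Y x * (if i = j then (1:ℝ) else 0)) *
            Y x i * (x j / ‖x‖ ^ 2)
    = (1/2) * ∫ x : EuclideanSpace ℝ (Fin n),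
        ‖x‖ ^ (-2 * s - (n : ℝ)) *
          ((s - 1) * (∑ i, (Y x i) ^ 2) +
            (2 * s + n) * (∑ i, (x i / ‖x‖) * Y x i) ^ 2) :=
  radial_killing_identity_general n s Y hY hsupp h0
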